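/- arXiv:1608.03123 — 6 statements merged into one kernel-verified Lean document; each statement's English description precedes it below -/
import Mathlib

section
/- For bit strings x, y of length n lying on the Jump_k plateau (|x|₁ = |y|₁ = n−k) with Hamming distance 2d where d > 0, the probability that uniform crossover followed by standard bit mutation with rate 1/n produces the all-ones string 1^n equals ∑_{i=0}^{2d} C(2d,i) · 2^{-2d} · n^{-(k+d-i)} · (1 − 1/n)^{n−k−d+i}, and this sum is at least 2^{-2d} · n^{-(k−d)} · (1 − 1/n)^{n−k+d}. -/
open Finset

/-- number of 1-bits in a bit string -/
def onesCount {n : ℕ} (x : Fin n → Bool) : ℕ :=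
  (Finset.univ.filter (fun i => x i = true)).card

/-- Hamming distance between two bit strings -/
def hamDist {n : ℕ} (x y : Fin n → Bool) : ℕ :=
  (Finset.univ.filter (fun i => x i ≠ y i)).card

/-- offspring of uniform crossover (choice `c`, `true` means take the bit of `x`)
followed by mutation (flip indicator `m`) -/
def offspring {n : ℕ} (x y c m : Fin n → Bool) (i : Fin n) : Bool :=
  xor (if c i then x i else y i) (m i)

/-- probability that uniform crossover of `x` and `y` followed by standard bit mutation
with rate `1/n` produces the all-ones string -/
noncomputable def probOptimum {n : ℕ} (x y : Fin n → Bool) : ℝ :=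
  ∑ c : Fin n → Bool, ∑ m : Fin n → Bool,
    ((1 / 2 : ℝ) ^ n * ∏ i : Fin n, (if m i then (1 / (n : ℝ)) else 1 - 1 / (n : ℝ))) *
      (if ∀ i : Fin n, offspring x y c m i = true then 1 else 0)

private lemma half_pow_mul_two_pow (a : ℕ) : (1 / 2 : ℝ) ^ a * 2 ^ a = 1 := by
  rw [← mul_pow]; norm_num

theorem crossover_mutation_optimum_probability (n k d : ℕ)
    (hd : 0 < d) (hdk : d ≤ k) (hkn : k + d ≤ n)
    (x y : Fin n → Bool)
    (hx : onesCount x = n - k) (hy : onesCount y = n - k)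
    (hdist : hamDist x y = 2 * d) :
    probOptimum x y =
      ∑ i ∈ Finset.range (2 * d + 1),
        (Nat.choose (2 * d) i : ℝ) * (1 / 2 : ℝ) ^ (2 * d) * (1 / (n : ℝ)) ^ (k + d - i) *
          (1 - 1 / (n : ℝ)) ^ (n - k - d + i) ∧
    probOptimum x y ≥
      (1 / 2 : ℝ) ^ (2 * d) * (1 / (n : ℝ)) ^ (k - d) * (1 - 1 / (n : ℝ)) ^ (n - k + d) := by
  classical
  have hn : 0 < n := by omega
  have hn1 : (1 : ℝ) ≤ (n : ℝ) := by exact_mod_cast hn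
  set p : ℝ := 1 / (n : ℝ) with hp
  have hp0 : 0 ≤ p := by positivity
  have hp1 : p ≤ 1 := by
    rw [hp, div_le_one (by positivity)]; exact hn1
  have hq0 : (0 : ℝ) ≤ 1 - p := by linarith
  have hq1 : 1 - p ≤ 1 := by linarith
  set w : Bool → ℝ := fun b => if b then 1 - p else p with hw
  -- Step 1: collapse the inner sum over mutations
  have step1 : probOptimum x y
      = (1 / 2 : ℝ) ^ n * ∑ c : Fin n → Bool, ∏ i, w (if c i then x i else y i) := by
    rw [probOptimum, Finset.mul_sum]
    refine Finset.sum_congr rfl fun c _ => ?_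
    rw [Finset.sum_eq_single (fun i => !(if c i then x i else y i))]
    · have hcond : ∀ i, offspring x y c (fun i => !(if c i then x i else y i)) i = true := by
        intro i
        simp [offspring]
      rw [if_pos hcond, mul_one]
      congr 1
      have hbit : ∀ b : Bool, (if (!b) = true then (1 / (n : ℝ)) else 1 - 1 / (n : ℝ)) = w b := by
        intro b; cases b <;> simp [hw, hp]
      exact Finset.prod_congr rfl fun i _ => hbit (if c i then x i else y i)
    · intro m _ hm
      rw [if_neg, mul_zero]
      intro h
      apply hm
      funext i
      have hi := h i
      revert hi
      cases hb : (if c i then x i else y i) <;> cases hmi : m i <;> simp_all [offspring]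
    · intro h
      exact absurd (Finset.mem_univ _) h
  -- Step 2: factorize the sum over crossover choices
  have step2 : (∑ c : Fin n → Bool, ∏ i, w (if c i then x i else y i))
      = ∏ i, (w (x i) + w (y i)) := by
    rw [← Fintype.prod_sum (fun i (b : Bool) => w (if b then x i else y i))]
    exact Finset.prod_congr rfl fun i _ => by rw [Fintype.sum_bool]; simp
  -- cardinality bookkeeping
  set A : Finset (Fin n) := Finset.univ.filter (fun i => x i = true) with hA
  set B : Finset (Fin n) := Finset.univ.filter (fun i => y i = true) with hB
  have hAcard : A.card = n - k := hx
  have hBcard : B.card = n - k := hy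
  have hdiff : (Finset.univ.filter (fun i => x i ≠ y i)).card = 2 * d := hdist
  have hsdiff : Finset.univ.filter (fun i => x i ≠ y i) = (A ∪ B) \ (A ∩ B) := by
    ext i
    simp only [Finset.mem_filter, Finset.mem_univ, true_and, Finset.mem_sdiff,
      Finset.mem_union, Finset.mem_inter, hA, hB]
    cases x i <;> cases y i <;> simp
  have hinter_sub : A ∩ B ⊆ A ∪ B := (Finset.inter_subset_left).trans Finset.subset_union_left
  have hcard1 : (A ∩ B).card + (A ∪ B).card = (n - k) + (n - k) := by
    rw [Finset.card_inter_add_card_union, hAcard, hBcard]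
  have hcard2 : (A ∪ B).card - (A ∩ B).card = 2 * d := by
    rw [← Finset.card_sdiff_of_subset hinter_sub, ← hsdiff, hdiff]
  have hcard3 : (A ∩ B).card ≤ (A ∪ B).card := Finset.card_le_card hinter_sub
  have hcardU : (A ∪ B).card ≤ n := by
    simpa using Finset.card_le_univ (A ∪ B)
  have hIcard : (A ∩ B).card = n - k - d := by omega
  have hUcard : (A ∪ B).card = n - k + d := by omega
  -- the three pieces of the product
  have hS11 : (Finset.univ.filter (fun i => x i = y i)).filter (fun i => x i = true)
      = A ∩ B := by
    ext i
    simp only [Finset.mem_filter, Finset.mem_univ, true_and, Finset.mem_inter, hA, hB]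
    cases x i <;> cases y i <;> simp
  have hS00 : (Finset.univ.filter (fun i => x i = y i)).filter (fun i => ¬ x i = true)
      = (A ∪ B)ᶜ := by
    ext i
    simp only [Finset.mem_filter, Finset.mem_univ, true_and, Finset.mem_compl,
      Finset.mem_union, hA, hB]
    cases x i <;> cases y i <;> simp
  have hcompl : ((A ∪ B)ᶜ).card = k - d := by
    rw [Finset.card_compl, hUcard]
    simp only [Fintype.card_fin]
    omega
  have step3 : (∏ i, (w (x i) + w (y i)))
      = (2 * (1 - p)) ^ (n - k - d) * (2 * p) ^ (k - d) := by
    rw [← Finset.prod_filter_mul_prod_filter_not Finset.univ (fun i => x i = y i)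
      (fun i => w (x i) + w (y i))]
    have hone : (∏ i ∈ Finset.univ.filter (fun i => ¬ x i = y i), (w (x i) + w (y i))) = 1 := by
      refine Finset.prod_eq_one fun i hi => ?_
      rw [Finset.mem_filter] at hi
      have := hi.2
      cases hxi : x i <;> cases hyi : y i <;> simp_all [hw]
    rw [hone, mul_one]
    rw [← Finset.prod_filter_mul_prod_filter_not
      (Finset.univ.filter (fun i => x i = y i)) (fun i => x i = true)
      (fun i => w (x i) + w (y i))]
    have h11 : (∏ i ∈ (Finset.univ.filter (fun i => x i = y i)).filter (fun i => x i = true),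
        (w (x i) + w (y i))) = (2 * (1 - p)) ^ (n - k - d) := by
      rw [Finset.prod_eq_pow_card, hS11, hIcard]
      intro i hi
      rw [hS11, Finset.mem_inter] at hi
      have hxi : x i = true := by
        have := hi.1; rw [hA, Finset.mem_filter] at this; exact this.2
      have hyi : y i = true := by
        have := hi.2; rw [hB, Finset.mem_filter] at this; exact this.2
      simp [hw, hxi, hyi]; ring
    have h00 : (∏ i ∈ (Finset.univ.filter (fun i => x i = y i)).filter (fun i => ¬ x i = true),
        (w (x i) + w (y i))) = (2 * p) ^ (k - d) := by
      rw [Finset.prod_eq_pow_card, hS00, hcompl]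
      intro i hi
      rw [hS00, Finset.mem_compl, Finset.mem_union] at hi
      push_neg at hi
      have hxi : x i = false := by
        have := hi.1; rw [hA, Finset.mem_filter] at this
        simpa using fun h => this ⟨Finset.mem_univ i, h⟩
      have hyi : y i = false := by
        have := hi.2; rw [hB, Finset.mem_filter] at this
        simpa using fun h => this ⟨Finset.mem_univ i, h⟩
      simp [hw, hxi, hyi]; ring
    rw [h11, h00]
  -- closed form for the probability
  have key : probOptimum x y = (1 / 2 : ℝ) ^ (2 * d) * p ^ (k - d) * (1 - p) ^ (n - k - d) := by
    rw [step1, step2, step3]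
    have hhalf : (1 / 2 : ℝ) ^ n
        = (1 / 2 : ℝ) ^ (2 * d) * ((1 / 2 : ℝ) ^ (n - k - d) * (1 / 2 : ℝ) ^ (k - d)) := by
      rw [← pow_add, ← pow_add]; congr 1; omega
    rw [hhalf, mul_pow, mul_pow]
    calc (1 / 2 : ℝ) ^ (2 * d) * ((1 / 2 : ℝ) ^ (n - k - d) * (1 / 2 : ℝ) ^ (k - d)) *
          (2 ^ (n - k - d) * (1 - p) ^ (n - k - d) * (2 ^ (k - d) * p ^ (k - d)))
        = (1 / 2 : ℝ) ^ (2 * d) * (((1 / 2 : ℝ) ^ (n - k - d) * 2 ^ (n - k - d)) *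
            ((1 / 2 : ℝ) ^ (k - d) * 2 ^ (k - d))) * (p ^ (k - d) * (1 - p) ^ (n - k - d)) := by
          ring
      _ = (1 / 2 : ℝ) ^ (2 * d) * p ^ (k - d) * (1 - p) ^ (n - k - d) := by
          rw [half_pow_mul_two_pow, half_pow_mul_two_pow]; ring
  constructor
  · -- the sum formula
    rw [key]
    have hterm : ∀ i ∈ Finset.range (2 * d + 1),
        (Nat.choose (2 * d) i : ℝ) * (1 / 2 : ℝ) ^ (2 * d) * p ^ (k + d - i) *
          (1 - p) ^ (n - k - d + i)
        = ((1 - p) ^ i * p ^ (2 * d - i) * (Nat.choose (2 * d) i : ℝ)) *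
            ((1 / 2 : ℝ) ^ (2 * d) * p ^ (k - d) * (1 - p) ^ (n - k - d)) := by
      intro i hi
      rw [Finset.mem_range] at hi
      have h1 : k + d - i = (k - d) + (2 * d - i) := by omega
      rw [h1, pow_add, pow_add]
      ring
    rw [Finset.sum_congr rfl hterm, ← Finset.sum_mul]
    rw [← add_pow (1 - p) p (2 * d)]
    norm_num
  · -- the lower bound
    rw [key, ge_iff_le]
    have hpow : (1 - p) ^ (n - k + d) ≤ (1 - p) ^ (n - k - d) :=
      pow_le_pow_of_le_one hq0 hq1 (by omega)
    have hnn : (0 : ℝ) ≤ (1 / 2 : ℝ) ^ (2 * d) * p ^ (k - d) := by positivity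
    calc (1 / 2 : ℝ) ^ (2 * d) * p ^ (k - d) * (1 - p) ^ (n - k + d)
        ≤ (1 / 2 : ℝ) ^ (2 * d) * p ^ (k - d) * (1 - p) ^ (n - k - d) :=
          mul_le_mul_of_nonneg_left hpow hnn
      _ = _ := rfl
end

section
/- Let 0 ≤ d ≤ k ≤ n with d ≥ 1 and n ≥ 4. Then 4^{-d} ≥ (1/4)·(χ/n)^{d−1} for any 0 < χ ≤ n/4. Consequently, ∑_{i=0}^{2d} C(2d,i) 2^{-2d} (χ/n)^{k+d-i} (1−χ/n)^{n−k−d+i} ≥ (1/4)(χ/n)^{k−1}(1−χ/n)^{n}. -/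
theorem jump_to_opt_inequality (n k d : ℕ) (χ : ℝ)
    (hd : 1 ≤ d) (hdk : d ≤ k) (hkdn : k + d ≤ n) (hn : 4 ≤ n)
    (hχ : 0 < χ) (hχn : χ ≤ (n : ℝ) / 4) :
    (4 : ℝ)⁻¹ ^ d ≥ (1 / 4) * (χ / n) ^ (d - 1) ∧
    ∑ i ∈ Finset.range (2 * d + 1),
        (Nat.choose (2 * d) i : ℝ) * (2 : ℝ)⁻¹ ^ (2 * d) * (χ / n) ^ (k + d - i) *
          (1 - χ / n) ^ (n - k - d + i)
      ≥ (1 / 4) * (χ / n) ^ (k - 1) * (1 - χ / n) ^ n := by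
  have hn0 : (0 : ℝ) < n := by
    have : (4 : ℝ) ≤ n := by exact_mod_cast hn
    linarith
  set p : ℝ := χ / n with hpdef
  have hp0 : 0 < p := div_pos hχ hn0
  have hp4 : p ≤ 4⁻¹ := by
    rw [hpdef, div_le_iff₀ hn0]
    linarith
  have h1p0 : (0 : ℝ) ≤ 1 - p := by linarith
  have h1p1 : 1 - p ≤ 1 := by linarith
  have h1 : (4 : ℝ)⁻¹ ^ d ≥ (1 / 4) * p ^ (d - 1) := by
    have hde : d = (d - 1) + 1 := by omega
    have he : (4 : ℝ)⁻¹ ^ d = 4⁻¹ * 4⁻¹ ^ (d - 1) := by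
      conv_lhs => rw [hde]
      rw [pow_succ]; ring
    calc (4 : ℝ)⁻¹ ^ d = 4⁻¹ * 4⁻¹ ^ (d - 1) := he
      _ ≥ (1 / 4) * p ^ (d - 1) := by
          have := pow_le_pow_left₀ hp0.le hp4 (d - 1)
          have h4 : (1 : ℝ) / 4 = 4⁻¹ := by norm_num
          rw [h4]
          exact mul_le_mul_of_nonneg_left this (by norm_num)
  refine ⟨h1, ?_⟩
  have hmem : 2 * d ∈ Finset.range (2 * d + 1) := Finset.self_mem_range_succ _
  have hsingle :
      (Nat.choose (2 * d) (2 * d) : ℝ) * (2 : ℝ)⁻¹ ^ (2 * d) * p ^ (k + d - 2 * d) *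
          (1 - p) ^ (n - k - d + 2 * d)
        ≤ ∑ i ∈ Finset.range (2 * d + 1),
            (Nat.choose (2 * d) i : ℝ) * (2 : ℝ)⁻¹ ^ (2 * d) * p ^ (k + d - i) *
              (1 - p) ^ (n - k - d + i) :=
    Finset.single_le_sum
      (f := fun i => (Nat.choose (2 * d) i : ℝ) * (2 : ℝ)⁻¹ ^ (2 * d) * p ^ (k + d - i) *
        (1 - p) ^ (n - k - d + i))
      (fun i _ => by positivity) hmem
  have hterm :
      (Nat.choose (2 * d) (2 * d) : ℝ) * (2 : ℝ)⁻¹ ^ (2 * d) * p ^ (k + d - 2 * d) *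
          (1 - p) ^ (n - k - d + 2 * d)
        = (4 : ℝ)⁻¹ ^ d * p ^ (k - d) * (1 - p) ^ (n - k - d + 2 * d) := by
    rw [Nat.choose_self]
    have h2 : (2 : ℝ)⁻¹ ^ (2 * d) = (4 : ℝ)⁻¹ ^ d := by
      rw [pow_mul]; norm_num
    have h3 : k + d - 2 * d = k - d := by omega
    rw [h2, h3]; ring
  have hpowle : (1 - p) ^ n ≤ (1 - p) ^ (n - k - d + 2 * d) :=
    pow_le_pow_of_le_one h1p0 h1p1 (by omega)
  have hfinal : (1 / 4) * p ^ (k - 1) * (1 - p) ^ n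
      ≤ (4 : ℝ)⁻¹ ^ d * p ^ (k - d) * (1 - p) ^ (n - k - d + 2 * d) := by
    have hkk : (k - 1) = (d - 1) + (k - d) := by omega
    have hA : (1 / 4) * p ^ (k - 1) ≤ (4 : ℝ)⁻¹ ^ d * p ^ (k - d) := by
      rw [hkk, pow_add]
      have := mul_le_mul_of_nonneg_right h1 (pow_nonneg hp0.le (k - d))
      linarith [this]
    calc (1 / 4) * p ^ (k - 1) * (1 - p) ^ n
        ≤ (4 : ℝ)⁻¹ ^ d * p ^ (k - d) * (1 - p) ^ n := by
          exact mul_le_mul_of_nonneg_right hA (pow_nonneg h1p0 n)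
      _ ≤ (4 : ℝ)⁻¹ ^ d * p ^ (k - d) * (1 - p) ^ (n - k - d + 2 * d) := by
          exact mul_le_mul_of_nonneg_left hpowle (by positivity)
  rw [ge_iff_le]
  calc (1 / 4) * p ^ (k - 1) * (1 - p) ^ n
      ≤ (4 : ℝ)⁻¹ ^ d * p ^ (k - d) * (1 - p) ^ (n - k - d + 2 * d) := hfinal
    _ = _ := hterm.symm
    _ ≤ _ := hsingle
end

section
/- Define the distance function h(y) = y + (n/μ)·e^{−κ(μ−y)} on integers y ∈ [μ/2, μ], where κ = ln(1+δ) for a constant δ > 0. Suppose a Markov chain Y(t) on this interval has, for μ/2 < y < μ, transition probabilities p₋(y) to y−1 and p₊(y) to y+1 with p₋(y) ≥ (1+δ)p₊(y) and p₋(y) = Ω(1/μ), and at y = μ has p₋(μ) = Ω(1/n). Then the expected one-step decrease of h(Y(t)) is Ω(1/μ) at every state y ∈ (μ/2, μ], and hence the expected hitting time of a state ≤ μ/2 from any start state is O(μ² + n). -/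
set_option maxHeartbeats 1000000

theorem species_drift_and_hitting_time (δ c₁ c₂ : ℝ) (hδ : 0 < δ) (hc₁ : 0 < c₁) (hc₂ : 0 < c₂) :
    ∃ c > (0 : ℝ), ∃ C > (0 : ℝ), ∀ n μ : ℕ, 2 ≤ μ → 1 ≤ n →
      ∀ pplus pminus : ℕ → ℝ,
      (∀ y : ℕ, (μ : ℝ) / 2 < y → (y : ℝ) < μ →
        0 ≤ pplus y ∧ pplus y + pminus y ≤ 1 ∧
        (1 + δ) * pplus y ≤ pminus y ∧ c₁ / μ ≤ pminus y) →
      pplus μ = 0 → c₂ / n ≤ pminus μ →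
      -- the distance function h(y) = y + (n/μ) e^{-κ(μ-y)} with κ = ln(1+δ)
      (∀ y : ℕ, (μ : ℝ) / 2 < y → y ≤ μ →
        pplus y * (((y : ℝ) + (n / μ) * Real.exp (-(Real.log (1 + δ)) * ((μ : ℝ) - y)))
              - (((y : ℝ) + 1) + (n / μ) * Real.exp (-(Real.log (1 + δ)) * ((μ : ℝ) - (y + 1)))))
          + pminus y * (((y : ℝ) + (n / μ) * Real.exp (-(Real.log (1 + δ)) * ((μ : ℝ) - y)))
              - (((y : ℝ) - 1) + (n / μ) * Real.exp (-(Real.log (1 + δ)) * ((μ : ℝ) - ((y : ℝ) - 1)))))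
          ≥ c / μ) ∧
      (∀ E : ℕ → ℝ,
        (∀ y : ℕ, (y : ℝ) ≤ (μ : ℝ) / 2 → E y = 0) →
        (∀ y : ℕ, (μ : ℝ) / 2 < y → y ≤ μ →
          E y = 1 + pplus y * E (y + 1) + pminus y * E (y - 1)
                + (1 - pplus y - pminus y) * E y) →
        ∀ y : ℕ, y ≤ μ → E y ≤ C * ((μ : ℝ) ^ 2 + n)) := by
  have h1δ : (0:ℝ) < 1 + δ := by linarith
  have hexpκ : Real.exp (Real.log (1 + δ)) = 1 + δ := Real.exp_log h1δ
  refine ⟨min c₁ c₂ * δ / (1 + δ), by positivity, (1 + δ) / (min c₁ c₂ * δ), by positivity, ?_⟩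
  set c : ℝ := min c₁ c₂ * δ / (1 + δ) with hcdef
  have hc : 0 < c := by positivity
  intro n μ hμ hn pplus pminus hint hpμ hpmμ
  have hμR : (2:ℝ) ≤ (μ:ℝ) := by exact_mod_cast hμ
  have hμpos : (0:ℝ) < μ := by linarith
  have hnpos : (0:ℝ) < n := by exact_mod_cast hn
  have hA : (0:ℝ) < (n:ℝ) / μ := div_pos hnpos hμpos
  -- exponential shift identities
  have base : ∀ a : ℝ, Real.exp (a + Real.log (1 + δ)) = Real.exp a * (1 + δ) := by
    intro a
    rw [Real.exp_add, hexpκ]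
  have hshift : ∀ x : ℝ, Real.exp (-(Real.log (1 + δ)) * ((μ:ℝ) - (x + 1))) =
      Real.exp (-(Real.log (1 + δ)) * ((μ:ℝ) - x)) * (1 + δ) := by
    intro x
    rw [← base]
    congr 1
    ring
  have hshift' : ∀ x : ℝ, Real.exp (-(Real.log (1 + δ)) * ((μ:ℝ) - (x - 1))) =
      Real.exp (-(Real.log (1 + δ)) * ((μ:ℝ) - x)) / (1 + δ) := by
    intro x
    rw [eq_div_iff h1δ.ne', ← base]
    congr 1
    ring
  -- Part 1: the drift bound
  have hdrift : ∀ y : ℕ, (μ : ℝ) / 2 < y → y ≤ μ →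
        pplus y * (((y : ℝ) + (n / μ) * Real.exp (-(Real.log (1 + δ)) * ((μ : ℝ) - y)))
              - (((y : ℝ) + 1) + (n / μ) * Real.exp (-(Real.log (1 + δ)) * ((μ : ℝ) - (y + 1)))))
          + pminus y * (((y : ℝ) + (n / μ) * Real.exp (-(Real.log (1 + δ)) * ((μ : ℝ) - y)))
              - (((y : ℝ) - 1) + (n / μ) * Real.exp (-(Real.log (1 + δ)) * ((μ : ℝ) - ((y : ℝ) - 1)))))
          ≥ c / μ := by
    intro y hy1 hy2
    rw [hshift ((y:ℝ)), hshift' ((y:ℝ))]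
    set A : ℝ := (n:ℝ) / μ with hAdef
    set e : ℝ := Real.exp (-(Real.log (1 + δ)) * ((μ:ℝ) - y)) with hedef
    have he : 0 < e := Real.exp_pos _
    rcases eq_or_lt_of_le hy2 with heq | hlt
    · -- y = μ
      have hp0 : pplus y = 0 := by rw [heq]; exact hpμ
      have hpm : c₂ / n ≤ pminus y := by rw [heq]; exact hpmμ
      have he1 : e = 1 := by
        rw [hedef, heq]
        norm_num
      rw [hp0, zero_mul, zero_add, he1]
      have hval : ((y:ℝ) + A * 1) - (((y:ℝ) - 1) + A * (1 / (1 + δ)))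
          = 1 + A * (δ / (1 + δ)) := by
        field_simp
        ring
      rw [hval]
      have e1 : c / μ = min c₁ c₂ * δ / ((1 + δ) * μ) := by rw [hcdef, div_div]
      have e2 : min c₁ c₂ * δ / ((1 + δ) * μ) ≤ c₂ * δ / ((1 + δ) * μ) := by
        gcongr
        exact min_le_right _ _
      have e3 : c₂ * δ / ((1 + δ) * μ) = (c₂ / n) * (A * (δ / (1 + δ))) := by
        rw [hAdef]
        field_simp
      have hApos : 0 ≤ A * (δ / (1 + δ)) := by positivity
      have e4 : (c₂ / n) * (A * (δ / (1 + δ))) ≤ pminus y * (A * (δ / (1 + δ))) :=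
        mul_le_mul_of_nonneg_right hpm hApos
      have hpmpos : 0 < pminus y := lt_of_lt_of_le (by positivity) hpm
      have e5 : pminus y * (A * (δ / (1 + δ))) ≤ pminus y * (1 + A * (δ / (1 + δ))) := by
        nlinarith
      rw [ge_iff_le, e1]
      calc min c₁ c₂ * δ / ((1 + δ) * μ) ≤ c₂ * δ / ((1 + δ) * μ) := e2
        _ = (c₂ / n) * (A * (δ / (1 + δ))) := e3
        _ ≤ pminus y * (A * (δ / (1 + δ))) := e4
        _ ≤ pminus y * (1 + A * (δ / (1 + δ))) := e5
    · -- μ/2 < y < μ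
      obtain ⟨hp0, hps, hratio, hpm⟩ := hint y hy1 (by exact_mod_cast hlt)
      have hpmpos : 0 < pminus y := lt_of_lt_of_le (by positivity) hpm
      have hq : pminus y - pminus y / (1 + δ) = pminus y * (δ / (1 + δ)) := by
        field_simp
        ring
      have hple : pplus y ≤ pminus y / (1 + δ) := by
        rw [le_div_iff₀ h1δ]
        linarith
      have key1 : pminus y * (δ / (1 + δ)) ≤ pminus y - pplus y := by linarith
      have key2 : pplus y * (A * e * δ) ≤ pminus y * (A * e * (δ / (1 + δ))) := by
        have hid : (1 + δ) * pplus y * (A * e * (δ / (1 + δ))) = pplus y * (A * e * δ) := by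
          field_simp
        have hpos : (0:ℝ) ≤ A * e * (δ / (1 + δ)) := by positivity
        nlinarith [mul_le_mul_of_nonneg_right hratio hpos]
      have key3 : c / μ ≤ pminus y * (δ / (1 + δ)) := by
        have e1 : c / μ = min c₁ c₂ * δ / ((1 + δ) * μ) := by rw [hcdef, div_div]
        have e2 : min c₁ c₂ * δ / ((1 + δ) * μ) ≤ c₁ * δ / ((1 + δ) * μ) := by
          gcongr
          exact min_le_left _ _
        have e3 : c₁ * δ / ((1 + δ) * μ) = (c₁ / μ) * (δ / (1 + δ)) := by
          field_simp
        have e4 : (c₁ / μ) * (δ / (1 + δ)) ≤ pminus y * (δ / (1 + δ)) :=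
          mul_le_mul_of_nonneg_right hpm (by positivity)
        rw [e1]
        calc min c₁ c₂ * δ / ((1 + δ) * μ) ≤ c₁ * δ / ((1 + δ) * μ) := e2
          _ = (c₁ / μ) * (δ / (1 + δ)) := e3
          _ ≤ pminus y * (δ / (1 + δ)) := e4
      have expand : pplus y * (((y:ℝ) + A * e) - (((y:ℝ) + 1) + A * (e * (1 + δ))))
          + pminus y * (((y:ℝ) + A * e) - (((y:ℝ) - 1) + A * (e / (1 + δ))))
          = (pminus y - pplus y)
            + (pminus y * (A * e * (δ / (1 + δ))) - pplus y * (A * e * δ)) := by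
        field_simp
        ring
      rw [ge_iff_le, expand]
      linarith
  refine ⟨hdrift, ?_⟩
  -- Part 2: hitting time via maximum principle
  intro E hE0 hErec
  obtain ⟨G, hG⟩ : ∃ G : ℕ → ℝ, ∀ y : ℕ,
      G y = ((μ:ℝ) / c) * ((y:ℝ) + ((n:ℝ) / μ) * Real.exp (-(Real.log (1 + δ)) * ((μ:ℝ) - (y:ℝ)))) :=
    ⟨_, fun _ => rfl⟩
  obtain ⟨D, hD⟩ : ∃ D : ℕ → ℝ, ∀ y : ℕ, D y = E y - G y := ⟨_, fun _ => rfl⟩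
  have hGnonneg : ∀ y : ℕ, 0 ≤ G y := by
    intro y
    rw [hG]
    have := Real.exp_pos (-(Real.log (1 + δ)) * ((μ:ℝ) - (y:ℝ)))
    have hy0 : (0:ℝ) ≤ (y:ℝ) := Nat.cast_nonneg y
    positivity
  -- recurrence consequence
  have hDrec : ∀ y : ℕ, (μ : ℝ) / 2 < y → y ≤ μ →
      pplus y * (D y - D (y + 1)) + pminus y * (D y - D (y - 1)) ≤ 0 := by
    intro y hy1 hy2
    have hyge2 : 2 ≤ y := by
      by_contra hlt
      push_neg at hlt
      interval_cases y <;> (push_cast at hy1; linarith)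
    have hc1 : ((y + 1 : ℕ) : ℝ) = (y:ℝ) + 1 := by push_cast; ring
    have hc2 : ((y - 1 : ℕ) : ℝ) = (y:ℝ) - 1 := by
      have h1y : 1 ≤ y := by omega
      push_cast [h1y]
      ring
    have hE : pplus y * (E y - E (y + 1)) + pminus y * (E y - E (y - 1)) = 1 := by
      have h := hErec y hy1 hy2
      linear_combination h
    have hGge : 1 ≤ pplus y * (G y - G (y + 1)) + pminus y * (G y - G (y - 1)) := by
      have hd := hdrift y hy1 hy2
      rw [ge_iff_le] at hd
      have hone : ((μ:ℝ)/c) * (c/μ) = 1 := by field_simp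
      rw [hG y, hG (y + 1), hG (y - 1), hc1, hc2]
      generalize Real.exp (-(Real.log (1 + δ)) * ((μ:ℝ) - ((y:ℝ) + 1))) = b at hd ⊢
      generalize Real.exp (-(Real.log (1 + δ)) * ((μ:ℝ) - ((y:ℝ) - 1))) = d at hd ⊢
      generalize Real.exp (-(Real.log (1 + δ)) * ((μ:ℝ) - (y:ℝ))) = a at hd ⊢
      have hmul := mul_le_mul_of_nonneg_left hd (le_of_lt (show (0:ℝ) < (μ:ℝ)/c by positivity))
      linarith [hmul, hone]
    have expand : pplus y * (D y - D (y + 1)) + pminus y * (D y - D (y - 1))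
        = (pplus y * (E y - E (y + 1)) + pminus y * (E y - E (y - 1)))
          - (pplus y * (G y - G (y + 1)) + pminus y * (G y - G (y - 1))) := by
      rw [hD y, hD (y + 1), hD (y - 1)]
      ring
    rw [expand, hE]
    linarith
  -- maximum principle
  have hmaxprin : ∀ k : ℕ, k ≤ μ → (∀ z : ℕ, z ≤ μ → D z ≤ D k) → D k ≤ 0 := by
    intro k
    induction k using Nat.strong_induction_on with
    | _ k ih =>
      intro hk hmax
      by_cases hhalf : (k:ℝ) ≤ (μ:ℝ) / 2
      · rw [hD, hE0 k hhalf, zero_sub, neg_nonpos]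
        exact hGnonneg k
      · push_neg at hhalf
        have hyge2 : 2 ≤ k := by
          by_contra hlt
          push_neg at hlt
          interval_cases k <;> (push_cast at hhalf; linarith)
        have hrec := hDrec k hhalf hk
        have hplus : 0 ≤ pplus k * (D k - D (k + 1)) := by
          rcases eq_or_lt_of_le hk with heq | hlt
          · rw [heq, hpμ, zero_mul]
          · have hltR : (k:ℝ) < μ := by exact_mod_cast hlt
            obtain ⟨hp0, _, _, _⟩ := hint k hhalf hltR
            have : D (k + 1) ≤ D k := hmax (k + 1) (by omega)
            nlinarith
        have hpmpos : 0 < pminus k := by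
          rcases eq_or_lt_of_le hk with heq | hlt
          · rw [heq]
            exact lt_of_lt_of_le (by positivity) hpmμ
          · have hltR : (k:ℝ) < μ := by exact_mod_cast hlt
            obtain ⟨_, _, _, hpm⟩ := hint k hhalf hltR
            exact lt_of_lt_of_le (by positivity) hpm
        have hstep : D k ≤ D (k - 1) := by
          by_contra hcon
          push_neg at hcon
          have := mul_pos hpmpos (sub_pos.mpr hcon)
          linarith
        have hkm : D (k - 1) ≤ D k := hmax (k - 1) (by omega)
        have heqD : D (k - 1) = D k := le_antisymm hkm hstep
        have hfin : D (k - 1) ≤ 0 := by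
          apply ih (k - 1) (by omega) (by omega)
          intro z hz
          rw [heqD]
          exact hmax z hz
        linarith
  -- conclude
  intro y hy
  obtain ⟨k, hkmem, hkmax⟩ := Finset.exists_max_image (Finset.range (μ + 1)) D ⟨0, by simp⟩
  rw [Finset.mem_range] at hkmem
  have hDk : D k ≤ 0 := hmaxprin k (by omega) (fun z hz => hkmax z (Finset.mem_range.mpr (by omega)))
  have hDy : D y ≤ 0 := le_trans (hkmax y (Finset.mem_range.mpr (by omega))) hDk
  rw [hD] at hDy
  have hGbound : G y ≤ (1 + δ) / (min c₁ c₂ * δ) * ((μ:ℝ) ^ 2 + n) := by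
    rw [hG]
    have hκnn : 0 ≤ Real.log (1 + δ) := Real.log_nonneg (by linarith)
    have hyμ : (y:ℝ) ≤ μ := by exact_mod_cast hy
    have hexple : Real.exp (-(Real.log (1 + δ)) * ((μ:ℝ) - y)) ≤ 1 := by
      apply Real.exp_le_one_iff.mpr
      nlinarith
    have hexppos : 0 < Real.exp (-(Real.log (1 + δ)) * ((μ:ℝ) - y)) :=
      Real.exp_pos _
    have h1 : (y:ℝ) + ((n:ℝ)/μ) * Real.exp (-(Real.log (1 + δ)) * ((μ:ℝ) - y)) ≤ (μ:ℝ) + (n:ℝ)/μ := by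
      have := mul_le_mul_of_nonneg_left hexple (le_of_lt hA)
      linarith
    have h2 : ((μ:ℝ)/c) * ((μ:ℝ) + (n:ℝ)/μ) = (1/c) * ((μ:ℝ)^2 + n) := by
      field_simp
    have h3 : (1:ℝ)/c = (1 + δ) / (min c₁ c₂ * δ) := by
      rw [hcdef]
      field_simp
    calc ((μ:ℝ)/c) * ((y:ℝ) + ((n:ℝ)/μ) * Real.exp (-(Real.log (1 + δ)) * ((μ:ℝ) - y)))
        ≤ ((μ:ℝ)/c) * ((μ:ℝ) + (n:ℝ)/μ) := mul_le_mul_of_nonneg_left h1 (by positivity)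
      _ = (1/c) * ((μ:ℝ)^2 + n) := h2
      _ = (1 + δ) / (min c₁ c₂ * δ) * ((μ:ℝ)^2 + n) := by rw [h3]
  linarith
end

section
/- Consider a sequence of real-valued recurrences D_i ≤ 50μ/(μ−i) + α·D_{i+1} for μ/2 < i < μ, with D_μ ≤ Cn for a constant C, where α = 1 + O(1/n) and μ = O(n). Then D_i ≤ ∑_{j=i}^{μ−1} (50μ/(μ−j))·α^{j−i} + α^{μ−i}·Cn = O(n + μ log μ) for all i in (μ/2, μ], and consequently E_i := ∑_{k=μ/2+1}^{i} D_k = O(μn + μ² log μ). -/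
theorem recurrence_difference_bound (c c' C : ℝ) (hc : 0 < c) (hc' : 0 < c') (hC : 0 < C) :
    ∃ C' > (0 : ℝ), ∀ n μ : ℕ, ∀ α : ℝ, ∀ D : ℕ → ℝ,
      0 < n → (μ : ℝ) ≤ c' * n → 1 ≤ α → α ≤ 1 + c / n →
      D μ ≤ C * n →
      (∀ i : ℕ, μ / 2 < i → i < μ → D i ≤ 50 * μ / ((μ : ℝ) - i) + α * D (i + 1)) →
      ∀ i : ℕ, μ / 2 < i → i ≤ μ →
        D i ≤ C' * ((n : ℝ) + μ * Real.log μ) ∧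
        (∑ j ∈ Finset.Icc (μ / 2 + 1) i, D j) ≤ C' * (μ * (n : ℝ) + (μ : ℝ) ^ 2 * Real.log μ) := by
  refine ⟨Real.exp (c * c') * (C + 50 * c' + 50), by positivity, ?_⟩
  intro n μ α D hn hμn hα1 hαn hDμ hrec
  -- key induction : D (μ - k) ≤ α^k * (C*n + 50*μ*harmonic k)
  have key : ∀ k : ℕ, k ≤ μ → μ / 2 < μ - k →
      D (μ - k) ≤ α ^ k * (C * n + 50 * μ * (harmonic k : ℝ)) := by
    intro k
    induction k with
    | zero => intro _ _; simpa using hDμ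
    | succ k ih =>
      intro hkμ hhalf
      have hk1 : k + 1 ≤ μ := hkμ
      have hkμ' : k ≤ μ := Nat.le_of_succ_le hkμ
      have hhalf' : μ / 2 < μ - k := lt_of_lt_of_le hhalf (by omega)
      have hiμ : μ - (k + 1) < μ := by omega
      have hsucc : μ - (k + 1) + 1 = μ - k := by omega
      have hcast : (μ : ℝ) - (μ - (k + 1) : ℕ) = (k : ℝ) + 1 := by
        have : ((μ - (k + 1) : ℕ) : ℝ) = (μ : ℝ) - ((k : ℝ) + 1) := by
          push_cast [Nat.cast_sub hk1]; ring
        rw [this]; ring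
      have h1 := hrec (μ - (k + 1)) hhalf hiμ
      rw [hsucc, hcast] at h1
      have h2 := ih hkμ' hhalf'
      have hαpow : (1 : ℝ) ≤ α ^ (k + 1) := one_le_pow₀ hα1
      have hμ0 : (0 : ℝ) ≤ μ := Nat.cast_nonneg μ
      have hterm : 50 * (μ : ℝ) / ((k : ℝ) + 1) ≤ α ^ (k + 1) * (50 * μ / ((k : ℝ) + 1)) := by
        nth_rewrite 1 [← one_mul (50 * (μ : ℝ) / ((k : ℝ) + 1))]
        exact mul_le_mul_of_nonneg_right hαpow (by positivity)
      calc D (μ - (k + 1)) ≤ 50 * μ / ((k : ℝ) + 1) + α * D (μ - k) := h1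
        _ ≤ 50 * μ / ((k : ℝ) + 1) + α * (α ^ k * (C * n + 50 * μ * (harmonic k : ℝ))) := by
            have hα0 : (0 : ℝ) ≤ α := le_trans zero_le_one hα1
            exact add_le_add_right (mul_le_mul_of_nonneg_left h2 hα0) _
        _ ≤ α ^ (k + 1) * (50 * μ / ((k : ℝ) + 1)) +
              α ^ (k + 1) * (C * n + 50 * μ * (harmonic k : ℝ)) := by
            refine add_le_add hterm (le_of_eq ?_)
            rw [pow_succ]; ring
        _ = α ^ (k + 1) * (C * n + 50 * μ * ((harmonic k : ℝ) + ((k : ℝ) + 1)⁻¹)) := by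
            field_simp; ring
        _ = α ^ (k + 1) * (C * n + 50 * μ * (harmonic (k + 1) : ℝ)) := by
            rw [harmonic_succ]; push_cast; ring
  -- bound on α ^ k for k ≤ μ
  have hαμ : ∀ k : ℕ, k ≤ μ → α ^ k ≤ Real.exp (c * c') := by
    intro k hk
    have hα0 : (0 : ℝ) ≤ α := le_trans zero_le_one hα1
    calc α ^ k ≤ α ^ μ := pow_le_pow_right₀ hα1 hk
      _ ≤ (Real.exp (c / n)) ^ μ := by
          refine pow_le_pow_left₀ hα0 (le_trans hαn ?_) μ
          have := Real.add_one_le_exp (c / n)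
          linarith
      _ = Real.exp (μ * (c / n)) := by rw [← Real.exp_nat_mul]
      _ ≤ Real.exp (c * c') := by
          apply Real.exp_le_exp.mpr
          rw [div_eq_mul_inv]
          have hn0 : (0 : ℝ) < n := by exact_mod_cast hn
          rw [show (μ : ℝ) * (c * (n : ℝ)⁻¹) = (μ : ℝ) / n * c by ring]
          have : (μ : ℝ) / n ≤ c' := by
            rw [div_le_iff₀ hn0]; linarith [hμn]
          nlinarith
  -- pointwise bound
  have hpt : ∀ i : ℕ, μ / 2 < i → i ≤ μ →
      D i ≤ Real.exp (c * c') * (C + 50 * c' + 50) * ((n : ℝ) + μ * Real.log μ) := by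
    intro i hi1 hi2
    have hμ1 : 1 ≤ μ := by omega
    have hk : μ - (μ - i) = i := by omega
    have h := key (μ - i) (by omega) (by omega)
    rw [hk] at h
    have hlog0 : (0 : ℝ) ≤ Real.log μ := by
      apply Real.log_nonneg; exact_mod_cast hμ1
    have hH : (harmonic (μ - i) : ℝ) ≤ 1 + Real.log μ := by
      calc (harmonic (μ - i) : ℝ) ≤ 1 + Real.log (μ - i : ℕ) := harmonic_le_one_add_log _
        _ ≤ 1 + Real.log μ := by
            refine add_le_add_right ?_ 1
            rcases Nat.eq_zero_or_pos (μ - i) with h0 | h0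
            · simp [h0]; exact hlog0
            · apply Real.log_le_log (by exact_mod_cast h0)
              exact_mod_cast Nat.sub_le μ i
    have hexp := hαμ (μ - i) (Nat.sub_le μ i)
    have hexp0 : (0 : ℝ) < Real.exp (c * c') := Real.exp_pos _
    have hα0 : (0 : ℝ) ≤ α := le_trans zero_le_one hα1
    have hμ0 : (0 : ℝ) ≤ μ := Nat.cast_nonneg μ
    have hn0 : (0 : ℝ) < n := by exact_mod_cast hn
    have hinner0 : (0 : ℝ) ≤ C * n + 50 * μ * (harmonic (μ - i) : ℝ) := by
      have hh0 : (0:ℚ) ≤ harmonic (μ - i) := by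
        rcases Nat.eq_zero_or_pos (μ - i) with h0 | h0
        · simp [h0]
        · exact (harmonic_pos (by omega)).le
      have : (0:ℝ) ≤ (harmonic (μ - i) : ℝ) := by exact_mod_cast hh0
      nlinarith
    calc D i ≤ α ^ (μ - i) * (C * n + 50 * μ * (harmonic (μ - i) : ℝ)) := h
      _ ≤ Real.exp (c * c') * (C * n + 50 * μ * (harmonic (μ - i) : ℝ)) :=
          mul_le_mul_of_nonneg_right hexp hinner0
      _ ≤ Real.exp (c * c') * (C * n + 50 * μ * (1 + Real.log μ)) := by
          have h50 : (0:ℝ) ≤ 50 * (μ:ℝ) := by positivity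
          have := mul_le_mul_of_nonneg_left hH h50
          nlinarith
      _ ≤ Real.exp (c * c') * ((C + 50 * c' + 50) * ((n : ℝ) + μ * Real.log μ)) := by
          apply mul_le_mul_of_nonneg_left _ (le_of_lt hexp0)
          nlinarith [hμn, hlog0, hμ0, hn0, mul_nonneg hμ0 hlog0]
      _ = Real.exp (c * c') * (C + 50 * c' + 50) * ((n : ℝ) + μ * Real.log μ) := by ring
  intro i hi1 hi2
  refine ⟨hpt i hi1 hi2, ?_⟩
  -- sum bound
  set C' := Real.exp (c * c') * (C + 50 * c' + 50) with hC'
  have hC'0 : (0 : ℝ) < C' := by positivity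
  have hμ1 : 1 ≤ μ := by omega
  have hlog0 : (0 : ℝ) ≤ Real.log μ := Real.log_nonneg (by exact_mod_cast hμ1)
  have hB0 : (0 : ℝ) ≤ C' * ((n : ℝ) + μ * Real.log μ) := by
    have hn0 : (0 : ℝ) < n := by exact_mod_cast hn
    have hμ0 : (0 : ℝ) ≤ μ := Nat.cast_nonneg μ
    have := mul_nonneg hμ0 hlog0
    nlinarith
  have hcard : (Finset.Icc (μ / 2 + 1) i).card ≤ μ := by
    rw [Nat.card_Icc]; omega
  calc (∑ j ∈ Finset.Icc (μ / 2 + 1) i, D j)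
      ≤ ∑ j ∈ Finset.Icc (μ / 2 + 1) i, C' * ((n : ℝ) + μ * Real.log μ) := by
        apply Finset.sum_le_sum
        intro j hj
        rw [Finset.mem_Icc] at hj
        exact hpt j (by omega) (by omega)
    _ = (Finset.Icc (μ / 2 + 1) i).card * (C' * ((n : ℝ) + μ * Real.log μ)) := by
        rw [Finset.sum_const, nsmul_eq_mul]
    _ ≤ (μ : ℝ) * (C' * ((n : ℝ) + μ * Real.log μ)) := by
        apply mul_le_mul_of_nonneg_right _ hB0
        exact_mod_cast hcard
    _ = C' * (μ * (n : ℝ) + (μ : ℝ) ^ 2 * Real.log μ) := by ring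
end

section
/- For integers 1 ≤ k and n with k ≤ n/2, ∏_{i=1}^{k−1} ((k−i)/k · (n−k−i)/(n−k)) ≥ ((n−2k)/(n−k))^{k−1} · (k−1)!/k^{k−1} ≥ (1 − k²/(n−k)) · e^{−k}. -/
open Finset

lemma prod_sub_eq_factorial (k : ℕ) (hk : 1 ≤ k) :
    ∏ i ∈ Finset.Icc 1 (k - 1), ((k : ℝ) - i) = (Nat.factorial (k - 1) : ℝ) := by
  have hcong : ∀ i ∈ Finset.Icc 1 (k - 1), ((k : ℝ) - i) = ((k - i : ℕ) : ℝ) := by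
    intro i hi
    simp only [Finset.mem_Icc] at hi
    rw [Nat.cast_sub (by omega)]
  rw [Finset.prod_congr rfl hcong, ← Nat.cast_prod]
  congr 1
  have : ∏ i ∈ Finset.Icc 1 (k - 1), (k - i) = ∏ i ∈ Finset.Icc 1 (k - 1), i := by
    apply Finset.prod_nbij' (fun i => k - i) (fun i => k - i)
    · intro i hi; simp only [Finset.mem_Icc] at hi ⊢; omega
    · intro i hi; simp only [Finset.mem_Icc] at hi ⊢; omega
    · intro i hi; simp only [Finset.mem_Icc] at hi; omega
    · intro i hi; simp only [Finset.mem_Icc] at hi; omega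
    · intro i hi; rfl
  rw [this, show Finset.Icc 1 (k-1) = Finset.Ico 1 (k-1+1) from by rw [Finset.Ico_add_one_right_eq_Icc],
    Finset.prod_Ico_eq_prod_range]
  simp only [Nat.add_sub_cancel]
  rw [← Finset.prod_range_add_one_eq_factorial (k-1)]
  exact Finset.prod_congr rfl fun j _ => by omega

theorem drift_apart_probability (n k : ℕ) (hk : 1 ≤ k) (hkn : 2 * k ≤ n) :
    (∏ i ∈ Finset.Icc 1 (k - 1),
        (((k : ℝ) - i) / k * (((n : ℝ) - k - i) / ((n : ℝ) - k))))
      ≥ (((n : ℝ) - 2 * k) / ((n : ℝ) - k)) ^ (k - 1) * (Nat.factorial (k - 1) : ℝ) / (k : ℝ) ^ (k - 1) ∧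
    (((n : ℝ) - 2 * k) / ((n : ℝ) - k)) ^ (k - 1) * (Nat.factorial (k - 1) : ℝ) / (k : ℝ) ^ (k - 1)
      ≥ (1 - (k : ℝ) ^ 2 / ((n : ℝ) - k)) * Real.exp (-(k : ℝ)) := by
  have hk1 : (1 : ℝ) ≤ (k : ℝ) := by exact_mod_cast hk
  have hkpos : (0 : ℝ) < k := by linarith
  have hnk : (k : ℝ) ≤ (n : ℝ) - k := by
    have : (2 * k : ℝ) ≤ n := by exact_mod_cast hkn
    linarith
  have hnkpos : (0 : ℝ) < (n : ℝ) - k := lt_of_lt_of_le hkpos hnk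
  have hq0 : (0 : ℝ) ≤ ((n : ℝ) - 2 * k) / ((n : ℝ) - k) :=
    div_nonneg (by linarith) hnkpos.le
  constructor
  · -- first inequality
    have hcard : (Finset.Icc 1 (k - 1)).card = k - 1 := by simp
    have hrw : (((n : ℝ) - 2 * k) / ((n : ℝ) - k)) ^ (k - 1) * (Nat.factorial (k - 1) : ℝ)
        / (k : ℝ) ^ (k - 1)
        = ∏ i ∈ Finset.Icc 1 (k - 1),
            (((k : ℝ) - i) / k * (((n : ℝ) - 2 * k) / ((n : ℝ) - k))) := by
      rw [Finset.prod_mul_distrib, Finset.prod_const, hcard,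
        Finset.prod_div_distrib, Finset.prod_const, hcard, prod_sub_eq_factorial k hk]
      ring
    rw [ge_iff_le, hrw]
    apply Finset.prod_le_prod
    · intro i hi
      simp only [Finset.mem_Icc] at hi
      have hik : (i : ℝ) ≤ (k : ℝ) - 1 := by
        have : (i:ℝ) ≤ ((k-1:ℕ):ℝ) := by exact_mod_cast hi.2
        rwa [Nat.cast_sub hk, Nat.cast_one] at this
      exact mul_nonneg (div_nonneg (by linarith) hkpos.le) hq0
    · intro i hi
      simp only [Finset.mem_Icc] at hi
      have hik : (i : ℝ) ≤ (k : ℝ) - 1 := by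
        have : (i:ℝ) ≤ ((k-1:ℕ):ℝ) := by exact_mod_cast hi.2
        rwa [Nat.cast_sub hk, Nat.cast_one] at this
      have h1 : (0 : ℝ) ≤ ((k : ℝ) - i) / k := div_nonneg (by linarith) hkpos.le
      apply mul_le_mul_of_nonneg_left _ h1
      apply div_le_div_of_nonneg_right ?_ hnkpos.le
      linarith
  · -- second inequality
    set q : ℝ := ((n : ℝ) - 2 * k) / ((n : ℝ) - k) with hq
    set C : ℝ := 1 - (k : ℝ) ^ 2 / ((n : ℝ) - k) with hC
    have hBfac : (k : ℝ) * (Nat.factorial (k - 1) : ℝ) = (Nat.factorial k : ℝ) := by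
      rw [← Nat.cast_mul, Nat.mul_factorial_pred (by omega)]
    have hexpB : Real.exp (-(k : ℝ)) ≤ (Nat.factorial (k - 1) : ℝ) / (k : ℝ) ^ (k - 1) := by
      have h := Real.pow_div_factorial_le_exp (x := (k : ℝ)) hkpos.le k
      have hfacpos : (0 : ℝ) < (Nat.factorial k : ℝ) := by exact_mod_cast Nat.factorial_pos k
      rw [Real.exp_neg, inv_eq_one_div,
        div_le_div_iff₀ (Real.exp_pos _) (pow_pos hkpos _)]
      have hkk : (k : ℝ) ^ k = (k : ℝ) * (k : ℝ) ^ (k - 1) :=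
        (mul_pow_sub_one (by omega) _).symm
      rw [div_le_iff₀ hfacpos] at h
      have : (k : ℝ) * (k : ℝ) ^ (k - 1) ≤ (k : ℝ) * ((Nat.factorial (k - 1) : ℝ) * Real.exp k) := by
        rw [← hkk, ← mul_assoc, hBfac]; rw [mul_comm (Real.exp ↑k)] at h; exact h
      have := le_of_mul_le_mul_left this hkpos
      linarith [this]
    have hApos : (0 : ℝ) ≤ q ^ (k - 1) := pow_nonneg hq0 _
    have hBpos : (0 : ℝ) ≤ (Nat.factorial (k - 1) : ℝ) / (k : ℝ) ^ (k - 1) :=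
      div_nonneg (by positivity) (by positivity)
    rw [ge_iff_le, mul_div_assoc]
    by_cases hCpos : 0 ≤ C
    · -- Bernoulli
      have hCA : C ≤ q ^ (k - 1) := by
        have ha : (-2 : ℝ) ≤ -((k : ℝ) / ((n : ℝ) - k)) := by
          have : (k : ℝ) / ((n : ℝ) - k) ≤ 1 := by
            rw [div_le_one hnkpos]; exact hnk
          linarith
        have hb := one_add_mul_le_pow ha (k - 1)
        have hqeq : 1 + -((k : ℝ) / ((n : ℝ) - k)) = q := by
          rw [hq, eq_div_iff hnkpos.ne', add_mul, neg_mul, div_mul_cancel₀ _ hnkpos.ne']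
          ring
        rw [hqeq] at hb
        have hcast : ((k - 1 : ℕ) : ℝ) = (k : ℝ) - 1 := by
          rw [Nat.cast_sub hk, Nat.cast_one]
        have : C ≤ 1 + ((k - 1 : ℕ) : ℝ) * -((k : ℝ) / ((n : ℝ) - k)) := by
          rw [hcast, hC]
          have h2 : ((k:ℝ) - 1) * ((k : ℝ) / ((n : ℝ) - k)) ≤ (k:ℝ)^2 / ((n:ℝ) - k) := by
            rw [show ((k:ℝ) - 1) * ((k : ℝ) / ((n : ℝ) - k)) = (((k:ℝ)-1)*k) / ((n:ℝ)-k) by ring]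
            apply div_le_div_of_nonneg_right ?_ hnkpos.le
            nlinarith
          linarith
        exact this.trans hb
      calc C * Real.exp (-(k:ℝ)) ≤ q ^ (k-1) * ((Nat.factorial (k - 1) : ℝ) / (k : ℝ) ^ (k - 1)) :=
            mul_le_mul hCA hexpB (Real.exp_nonneg _) hApos
        _ = _ := rfl
    · push_neg at hCpos
      have : C * Real.exp (-(k:ℝ)) ≤ 0 :=
        mul_nonpos_of_nonpos_of_nonneg hCpos.le (Real.exp_nonneg _)
      exact le_trans this (mul_nonneg hApos hBpos)
end

section
/- Let p₊(y) and p₋(y) satisfy p₊(y) ≤ A(y) + B(y) and p₋(y) ≥ A(y), where A(y) = y(μ−y)(μ+y)/(2μ²(μ+1)) · (1−1/n)^n and B(y) = c₊(μ−y)²/(μ²n), for μ/2 < y < μ, μ ≥ 2, n ≥ 2. Then p₊(y)/(p₊(y)+p₋(y)) ≤ 1/2 + C/n for a constant C depending only on c₊. -/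
lemma quarter_le_one_sub_inv_pow (n : ℕ) (hn : 2 ≤ n) :
    (1 / 4 : ℝ) ≤ (1 - 1 / (n : ℝ)) ^ n := by
  have hn2 : (2 : ℝ) ≤ (n : ℝ) := by exact_mod_cast hn
  have hnpos : (0 : ℝ) < n := by linarith
  set t : ℝ := 1 / (n : ℝ) with ht_def
  have ht0 : 0 < t := by positivity
  have ht : t ≤ 1 / 2 := by
    rw [ht_def, div_le_div_iff₀ hnpos (by norm_num : (0:ℝ) < 2)]
    linarith
  have hlog : Real.log (1 / 4) = 2 * Real.log (1 / 2) := by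
    rw [show (1 / 4 : ℝ) = (1 / 2) ^ 2 by norm_num, Real.log_pow]
    push_cast; ring
  have hexp_half : Real.exp (Real.log (1 / 4) / 2) = 1 / 2 := by
    rw [hlog]
    rw [show 2 * Real.log (1 / 2) / 2 = Real.log (1 / 2) by ring]
    exact Real.exp_log (by norm_num)
  have key : Real.exp (t * Real.log (1 / 4)) ≤ 1 - t := by
    have hc := convexOn_exp.2 (Set.mem_univ (0 : ℝ))
      (Set.mem_univ (Real.log (1 / 4) / 2))
      (by linarith : (0:ℝ) ≤ 1 - 2 * t) (by linarith : (0:ℝ) ≤ 2 * t) (by ring)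
    simp only [smul_eq_mul, mul_zero, zero_add, Real.exp_zero, mul_one] at hc
    rw [hexp_half] at hc
    calc Real.exp (t * Real.log (1 / 4))
        = Real.exp (2 * t * (Real.log (1 / 4) / 2)) := by ring_nf
      _ ≤ (1 - 2 * t) + 2 * t * (1 / 2) := hc
      _ = 1 - t := by ring
  have hnt : (n : ℝ) * t = 1 := by
    rw [ht_def]; field_simp
  calc (1 / 4 : ℝ) = Real.exp (Real.log (1 / 4)) :=
        (Real.exp_log (by norm_num)).symm
    _ = Real.exp (t * Real.log (1 / 4)) ^ n := by
        rw [← Real.exp_nat_mul, ← mul_assoc, hnt, one_mul]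
    _ ≤ (1 - t) ^ n := pow_le_pow_left₀ (Real.exp_pos _).le key n

theorem conditional_transition_probabilities (cplus : ℝ) (hcplus : 0 < cplus) :
    ∃ C > (0 : ℝ), ∀ n μ y : ℕ, 2 ≤ n → 2 ≤ μ →
      (μ : ℝ) / 2 < y → (y : ℝ) < μ →
      ∀ pplus pminus : ℝ, 0 ≤ pplus →
      pplus ≤ (y : ℝ) * ((μ : ℝ) - y) * ((μ : ℝ) + y) / (2 * (μ : ℝ) ^ 2 * ((μ : ℝ) + 1)) *
                (1 - 1 / (n : ℝ)) ^ n + cplus * ((μ : ℝ) - y) ^ 2 / ((μ : ℝ) ^ 2 * n) →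
      (y : ℝ) * ((μ : ℝ) - y) * ((μ : ℝ) + y) / (2 * (μ : ℝ) ^ 2 * ((μ : ℝ) + 1)) *
          (1 - 1 / (n : ℝ)) ^ n ≤ pminus →
      pplus / (pplus + pminus) ≤ 1 / 2 + C / n := by
  refine ⟨4 * cplus, by positivity, ?_⟩
  intro n μ y hn hμ hy1 hy2 pplus pminus hp0 hple hmge
  have hn2 : (2 : ℝ) ≤ (n : ℝ) := by exact_mod_cast hn
  have hμ2 : (2 : ℝ) ≤ (μ : ℝ) := by exact_mod_cast hμ
  have hn0 : (0 : ℝ) < n := by linarith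
  have hμ0 : (0 : ℝ) < μ := by linarith
  have hy0 : (0 : ℝ) < y := by linarith
  have hy1' : (1 : ℝ) ≤ y := by linarith
  have hr : (1 / 4 : ℝ) ≤ (1 - 1 / (n : ℝ)) ^ n := quarter_le_one_sub_inv_pow n hn
  set r : ℝ := (1 - 1 / (n : ℝ)) ^ n with hr_def
  set A : ℝ := (y : ℝ) * ((μ : ℝ) - y) * ((μ : ℝ) + y) / (2 * (μ : ℝ) ^ 2 * ((μ : ℝ) + 1)) * r
    with hA_def
  have hXpos : (0 : ℝ) < (y : ℝ) * ((μ : ℝ) - y) * ((μ : ℝ) + y) :=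
    mul_pos (mul_pos hy0 (by linarith)) (by linarith)
  have hDpos : (0 : ℝ) < 2 * (μ : ℝ) ^ 2 * ((μ : ℝ) + 1) :=
    mul_pos (mul_pos two_pos (pow_pos hμ0 2)) (by linarith)
  have hrpos : (0 : ℝ) < r := by rw [hr_def]; linarith
  have hApos : 0 < A := mul_pos (div_pos hXpos hDpos) hrpos
  -- key product inequality: (μ - y)(μ + 1) ≤ y(μ + y)
  have p1 : (μ : ℝ) * μ ≤ 2 * y * μ := by nlinarith
  have p2 : (y : ℝ) ≤ y * y := by nlinarith
  have h2 : ((μ : ℝ) - y) * ((μ : ℝ) + 1) ≤ (y : ℝ) * ((μ : ℝ) + y) := by nlinarith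
  -- B * n ≤ 8 cplus A
  have hkeyBA : cplus * ((μ : ℝ) - y) ^ 2 / (μ : ℝ) ^ 2 ≤ 8 * cplus * A := by
    rw [hA_def, div_le_iff₀ (pow_pos hμ0 2)]
    rw [show (8 : ℝ) * cplus * ((y : ℝ) * ((μ : ℝ) - y) * ((μ : ℝ) + y) /
        (2 * (μ : ℝ) ^ 2 * ((μ : ℝ) + 1)) * r) * (μ : ℝ) ^ 2
      = 8 * cplus * ((y : ℝ) * ((μ : ℝ) - y) * ((μ : ℝ) + y)) * r * (μ : ℝ) ^ 2 /
        (2 * (μ : ℝ) ^ 2 * ((μ : ℝ) + 1)) by ring]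
    rw [le_div_iff₀ hDpos]
    have q1 : 8 * cplus * ((y : ℝ) * ((μ : ℝ) - y) * ((μ : ℝ) + y)) * (μ : ℝ) ^ 2 * (1 / 4)
        ≤ 8 * cplus * ((y : ℝ) * ((μ : ℝ) - y) * ((μ : ℝ) + y)) * (μ : ℝ) ^ 2 * r :=
      mul_le_mul_of_nonneg_left hr
        (mul_nonneg (mul_nonneg (by linarith : (0:ℝ) ≤ 8 * cplus) hXpos.le) (by positivity))
    have q2 : 2 * cplus * ((μ : ℝ) - y) * (μ : ℝ) ^ 2 * (((μ : ℝ) - y) * ((μ : ℝ) + 1))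
        ≤ 2 * cplus * ((μ : ℝ) - y) * (μ : ℝ) ^ 2 * ((y : ℝ) * ((μ : ℝ) + y)) :=
      mul_le_mul_of_nonneg_left h2
        (mul_nonneg (mul_nonneg (by linarith : (0:ℝ) ≤ 2 * cplus)
          (by linarith : (0:ℝ) ≤ (μ : ℝ) - y)) (by positivity))
    linarith [q1, q2]
  -- main comparison
  have hnB : (n : ℝ) * (cplus * ((μ : ℝ) - y) ^ 2 / ((μ : ℝ) ^ 2 * n))
      = cplus * ((μ : ℝ) - y) ^ 2 / (μ : ℝ) ^ 2 := by
    field_simp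
  have key : (n : ℝ) * pplus ≤ ((n : ℝ) + 8 * cplus) * pminus := by
    have h3 : (n : ℝ) * pplus ≤ (n : ℝ) * A + cplus * ((μ : ℝ) - y) ^ 2 / (μ : ℝ) ^ 2 := by
      calc (n : ℝ) * pplus ≤ (n : ℝ) * (A + cplus * ((μ : ℝ) - y) ^ 2 / ((μ : ℝ) ^ 2 * n)) :=
            mul_le_mul_of_nonneg_left hple hn0.le
        _ = (n : ℝ) * A + (n : ℝ) * (cplus * ((μ : ℝ) - y) ^ 2 / ((μ : ℝ) ^ 2 * n)) := by ring
        _ = (n : ℝ) * A + cplus * ((μ : ℝ) - y) ^ 2 / (μ : ℝ) ^ 2 := by rw [hnB]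
    have h4 : (n : ℝ) * A + cplus * ((μ : ℝ) - y) ^ 2 / (μ : ℝ) ^ 2
        ≤ ((n : ℝ) + 8 * cplus) * A := by
      linarith [hkeyBA]
    have h5 : ((n : ℝ) + 8 * cplus) * A ≤ ((n : ℝ) + 8 * cplus) * pminus :=
      mul_le_mul_of_nonneg_left hmge (by linarith)
    linarith
  have hden : 0 < pplus + pminus := by linarith
  have hrhs : (1 : ℝ) / 2 + 4 * cplus / (n : ℝ) = ((n : ℝ) + 8 * cplus) / (2 * n) := by
    field_simp; ring
  rw [hrhs, div_le_div_iff₀ hden (by linarith : (0:ℝ) < 2 * n)]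
  linarith [key, mul_nonneg hcplus.le hp0]
end
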